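/- Let k ≥ 2, L > 0, M > 0, let α₀, a₂, …, a_k, b₁ be nonnegative reals and a₁ > 0 with 4α₀a₁ = b₁² and b₁ - 2a₁L > 0. Define ψ(x) = α₀ + Σ_{i=1}^k a_i x_i² + b₁ x₁ and φ₀ = √ψ on [-L,L]^k (where ψ > 0). Then for every x ∈ [-L,L]^k and every 2 ≤ i ≤ k, |∂φ₀/∂x₁(x) · ∂φ₀/∂x_i(x)| = a_i |x_i| (2a₁x₁ + b₁) / (2ψ(x)) ≤ √(a₁ a_i)/2. In particular, if √(a₁)√(a_i) ≤ 2M for all 2 ≤ i ≤ k, then |∂φ₀/∂x₁(x) · ∂φ₀/∂x_i(x)| ≤ M on [-L,L]^k. -/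

import Mathlib

/-!
By the chain rule `∂ⱼ√ψ = ∂ⱼψ / (2√ψ)`, so the product of the two partials is
`∂₁ψ ∂ᵢψ / (4ψ) = aᵢ xᵢ P / (2ψ)` with `P = 2a₁x₁ + b₁`, and `b₁ - 2a₁L > 0` makes `P > 0` on the
cube. The relation `4α₀a₁ = b₁²` completes the square, `ψ = P² / (4a₁) + Σ_{j ≥ 2} aⱼ xⱼ²`, so
`ψ ≥ P² / (4a₁) + aᵢ xᵢ²`, and AM–GM on these two summands gives `aᵢ |xᵢ| P ≤ √(a₁aᵢ) ψ`.
-/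

theorem fderiv_sqrt_apply_mul_fderiv_sqrt_apply {E : Type*} [NormedAddCommGroup E]
    [NormedSpace ℝ E] {f : E → ℝ} {x : E} (hf : DifferentiableAt ℝ f x) (hx : 0 < f x)
    (u v : E) :
    fderiv ℝ (fun y => √(f y)) x u * fderiv ℝ (fun y => √(f y)) x v =
      fderiv ℝ f x u * fderiv ℝ f x v / (4 * f x) := by
  have hsqrt : 0 < √(f x) := Real.sqrt_pos.mpr hx
  rw [(hf.hasFDerivAt.sqrt hx.ne').fderiv]
  simp only [FunLike.coe_smul, Pi.smul_apply, smul_eq_mul]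
  field_simp
  rw [Real.sq_sqrt hx.le]
  ring

section Quadratic

variable {ι : Type*} [Fintype ι] (c b : ℝ) (a : ι → ℝ) (j₀ : ι)

theorem fderiv_quadratic_apply_single [DecidableEq ι] (x : ι → ℝ) (i : ι) :
    fderiv ℝ (fun y : ι → ℝ => c + ∑ j, a j * y j ^ 2 + b * y j₀) x (Pi.single i 1) =
      2 * a i * x i + b * Pi.single (M := fun _ => ℝ) i 1 j₀ := by
  have hproj (j : ι) := hasFDerivAt_apply (𝕜 := ℝ) (F' := fun _ : ι => ℝ) j x
  have hsq (j : ι) := ((hasDerivAt_pow 2 (x j)).const_mul (a j)).comp_hasFDerivAt x (hproj j)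
  have hq : HasFDerivAt (fun y : ι → ℝ => c + ∑ j, a j * y j ^ 2 + b * y j₀) _ x :=
    ((hasFDerivAt_const c x).add (HasFDerivAt.fun_sum fun j _ => hsq j)).add
      ((hproj j₀).const_mul b)
  simp only [hq.fderiv, Nat.cast_ofNat, Nat.add_one_sub_one, pow_one, zero_add, add_apply,
    sum_apply, smul_apply, ContinuousLinearMap.proj_apply, Pi.single_apply, smul_eq_mul, mul_ite,
    mul_one, mul_zero, Finset.sum_ite_eq', Finset.mem_univ, ↓reduceIte, add_left_inj]
  ring

theorem completed_square_add_mul_sq_le [DecidableEq ι] (hrel : 4 * c * a j₀ = b ^ 2)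
    (ha₀ : 0 < a j₀) (ha : ∀ j, j ≠ j₀ → 0 ≤ a j) {i : ι} (hi : i ≠ j₀) (x : ι → ℝ) :
    (2 * a j₀ * x j₀ + b) ^ 2 / (4 * a j₀) + a i * x i ^ 2 ≤
      c + ∑ j, a j * x j ^ 2 + b * x j₀ := by
  have hpair : a j₀ * x j₀ ^ 2 + a i * x i ^ 2 ≤ ∑ j, a j * x j ^ 2 := by
    rw [← Finset.sum_pair (f := fun j => a j * x j ^ 2) hi.symm]
    refine Finset.sum_le_sum_of_subset_of_nonneg (Finset.subset_univ _) fun j _ hj => ?_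
    exact mul_nonneg (ha j (by simp_all)) (sq_nonneg _)
  have hsquare : (2 * a j₀ * x j₀ + b) ^ 2 / (4 * a j₀) = c + a j₀ * x j₀ ^ 2 + b * x j₀ := by
    field_simp
    linear_combination -hrel
  linarith

end Quadratic

theorem mul_abs_mul_le_sqrt_mul_mul {A B : ℝ} (hA : 0 < A) (hB : 0 ≤ B) (p t : ℝ) :
    B * |t| * p ≤ √(A * B) * (p ^ 2 / (4 * A) + B * t ^ 2) := by
  have hs0 : 0 ≤ √(A * B) := Real.sqrt_nonneg _
  have hs : √(A * B) ^ 2 = A * B := Real.sq_sqrt (by positivity)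
  generalize √(A * B) = s at hs0 hs ⊢
  have key : s * (p ^ 2 / (4 * A) + B * t ^ 2) - B * |t| * p =
      s * (p - 2 * s * |t|) ^ 2 / (4 * A) := by
    field_simp
    rw [← sq_abs t]
    linear_combination (4 * |t| * p - 4 * s * |t| ^ 2) * hs
  have : 0 ≤ s * (p - 2 * s * |t|) ^ 2 / (4 * A) := by positivity
  linarith

/-- for `φ₀ = √ψ` with `4α₀a₁ = b₁²` and `b₁ - 2a₁L > 0`, on `[-L,L]^k` and for
`2 ≤ i ≤ k` one has `|∂φ₀/∂x₁ · ∂φ₀/∂xᵢ| = aᵢ|xᵢ|(2a₁x₁+b₁)/(2ψ(x)) ≤ √(a₁aᵢ)/2`; in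
particular it is `≤ M` whenever `√a₁ √aᵢ ≤ 2M` for all such `i` (0-based indices). -/
theorem product_partials_bound (k : ℕ) (hk : 2 ≤ k) (L M : ℝ)
    (α₀ b₁ : ℝ) (a : Fin k → ℝ)
    (ha1 : 0 < a ⟨0, by omega⟩) (hai : ∀ i : Fin k, i ≠ ⟨0, by omega⟩ → 0 ≤ a i)
    (hrel0 : 4 * α₀ * a ⟨0, by omega⟩ = b₁ ^ 2)
    (hbL : 0 < b₁ - 2 * a ⟨0, by omega⟩ * L)
    (ψ : (Fin k → ℝ) → ℝ)
    (hψ : ψ = fun x => α₀ + (∑ i, a i * x i ^ 2) + b₁ * x ⟨0, by omega⟩) :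
    ∀ x : Fin k → ℝ, (∀ i, x i ∈ Set.Icc (-L) L) →
      ∀ i : Fin k, i ≠ ⟨0, by omega⟩ →
        (|fderiv ℝ (fun y => Real.sqrt (ψ y)) x (Pi.single (⟨0, by omega⟩ : Fin k) 1) *
            fderiv ℝ (fun y => Real.sqrt (ψ y)) x (Pi.single i 1)| =
          a i * |x i| * (2 * a ⟨0, by omega⟩ * x ⟨0, by omega⟩ + b₁) / (2 * ψ x)) ∧
        (|fderiv ℝ (fun y => Real.sqrt (ψ y)) x (Pi.single (⟨0, by omega⟩ : Fin k) 1) *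
            fderiv ℝ (fun y => Real.sqrt (ψ y)) x (Pi.single i 1)| ≤
          Real.sqrt (a ⟨0, by omega⟩ * a i) / 2) ∧
        ((∀ i' : Fin k, i' ≠ ⟨0, by omega⟩ →
            Real.sqrt (a ⟨0, by omega⟩) * Real.sqrt (a i') ≤ 2 * M) →
          |fderiv ℝ (fun y => Real.sqrt (ψ y)) x (Pi.single (⟨0, by omega⟩ : Fin k) 1) *
            fderiv ℝ (fun y => Real.sqrt (ψ y)) x (Pi.single i 1)| ≤ M) := by
  intro x hx i hi
  set i₀ : Fin k := ⟨0, by omega⟩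
  set P := 2 * a i₀ * x i₀ + b₁
  have hP : 0 < P := by nlinarith [(hx i₀).1]
  have hψ_ge : P ^ 2 / (4 * a i₀) + a i * x i ^ 2 ≤ ψ x :=
    hψ ▸ completed_square_add_mul_sq_le α₀ b₁ a i₀ hrel0 ha1 hai hi x
  have hψ_pos : 0 < ψ x :=
    (add_pos_of_pos_of_nonneg (by positivity) (mul_nonneg (hai i hi) (sq_nonneg _))).trans_le
      hψ_ge
  have hprod : fderiv ℝ (fun y => √(ψ y)) x (Pi.single i₀ 1) *
      fderiv ℝ (fun y => √(ψ y)) x (Pi.single i 1) = a i * x i * P / (2 * ψ x) := by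
    rw [fderiv_sqrt_apply_mul_fderiv_sqrt_apply (hψ ▸ by fun_prop) hψ_pos, hψ,
      fderiv_quadratic_apply_single, fderiv_quadratic_apply_single]
    simp only [Pi.single_eq_same, Pi.single_eq_of_ne' hi, mul_one, mul_zero, add_zero]
    field_simp
    ring
  have heq : |fderiv ℝ (fun y => √(ψ y)) x (Pi.single i₀ 1) *
      fderiv ℝ (fun y => √(ψ y)) x (Pi.single i 1)| = a i * |x i| * P / (2 * ψ x) := by
    rw [hprod, abs_div, abs_mul, abs_mul, abs_of_nonneg (hai i hi), abs_of_pos hP,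
      abs_of_pos (by positivity : 0 < 2 * ψ x)]
  have hle : a i * |x i| * P / (2 * ψ x) ≤ √(a i₀ * a i) / 2 :=
    calc a i * |x i| * P / (2 * ψ x) ≤ √(a i₀ * a i) * ψ x / (2 * ψ x) := by
          gcongr ?_ / _
          exact (mul_abs_mul_le_sqrt_mul_mul ha1 (hai i hi) P (x i)).trans (by gcongr)
      _ = √(a i₀ * a i) / 2 := by field_simp
  refine ⟨heq, heq ▸ hle, fun hM => heq ▸ hle.trans ?_⟩
  rw [Real.sqrt_mul ha1.le]
  linarith [hM i hi]
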